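/- arXiv:1704.01322 — 2 statements merged into one kernel-verified Lean document; each statement's English description precedes it below -/
import Mathlib

section
/- Let A and B be DG Poisson algebras with Poisson brackets of degree p, with universal enveloping algebras (A^e, m_A, h_A) and (B^e, m_B, h_B). If φ: A → B is a DG Poisson algebra homomorphism, then there exists a unique DG algebra homomorphism φ^e: A^e → B^e such that φ^e ∘ m_A = m_B ∘ φ and φ^e ∘ h_A = h_B ∘ φ. -/
open TensorProduct

namespace DGPH

variable {k : Type} [Field k]

/-- The `n`-th graded piece of the induced grading on a tensor product of graded modules. -/
def tgrade {M N : Type} [AddCommGroup M] [Module k M] [AddCommGroup N] [Module k N]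
    (𝒜 : ℤ → Submodule k M) (ℬ : ℤ → Submodule k N) (n : ℤ) : Submodule k (M ⊗[k] N) :=
  ⨆ ij : {q : ℤ × ℤ // q.1 + q.2 = n},
    Submodule.span k
      (Set.image2 (fun a b => a ⊗ₜ[k] b) ((𝒜 ij.1.1 : Set M)) ((ℬ ij.1.2 : Set N)))

/-- Characterization of the Koszul-signed multiplication on a tensor product:
`(a ⊗ b)(a' ⊗ b') = (-1)^{|a'||b|} (a a') ⊗ (b b')`. -/
def KoszulMulChar {M N : Type} [AddCommGroup M] [Module k M] [AddCommGroup N] [Module k N]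
    (𝒜 : ℤ → Submodule k M) (ℬ : ℤ → Submodule k N)
    (mulM : M →ₗ[k] M →ₗ[k] M) (mulN : N →ₗ[k] N →ₗ[k] N)
    (μ : (M ⊗[k] N) →ₗ[k] (M ⊗[k] N) →ₗ[k] (M ⊗[k] N)) : Prop :=
  ∀ ⦃i j : ℤ⦄ (a : M) ⦃a' : M⦄ ⦃b : N⦄ (b' : N), a' ∈ 𝒜 i → b ∈ ℬ j →
    μ (a ⊗ₜ[k] b) (a' ⊗ₜ[k] b') = ((-1 : k) ^ (i * j)) • ((mulM a a') ⊗ₜ[k] (mulN b b'))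

/-- Characterization of the Koszul-signed Poisson bracket of degree `p` on a tensor product:
`{a⊗b, a'⊗b'} = (-1)^{(|a'|+p)|b|} {a,a'} ⊗ (bb') + (-1)^{(|b|+p)|a'|} (aa') ⊗ {b,b'}`. -/
def KoszulBracketChar {M N : Type} [AddCommGroup M] [Module k M] [AddCommGroup N] [Module k N]
    (𝒜 : ℤ → Submodule k M) (ℬ : ℤ → Submodule k N)
    (mulM : M →ₗ[k] M →ₗ[k] M) (mulN : N →ₗ[k] N →ₗ[k] N)
    (brM : M →ₗ[k] M →ₗ[k] M) (brN : N →ₗ[k] N →ₗ[k] N) (p : ℤ)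
    (β : (M ⊗[k] N) →ₗ[k] (M ⊗[k] N) →ₗ[k] (M ⊗[k] N)) : Prop :=
  ∀ ⦃i j : ℤ⦄ (a : M) ⦃a' : M⦄ ⦃b : N⦄ (b' : N), a' ∈ 𝒜 i → b ∈ ℬ j →
    β (a ⊗ₜ[k] b) (a' ⊗ₜ[k] b') =
      ((-1 : k) ^ ((i + p) * j)) • ((brM a a') ⊗ₜ[k] (mulN b b')) +
      ((-1 : k) ^ ((j + p) * i)) • ((mulM a a') ⊗ₜ[k] (brN b b'))

/-- Characterization of the Koszul-signed differential on a tensor product: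
`d(a ⊗ b) = d a ⊗ b + (-1)^{|a|} a ⊗ d b`. -/
def KoszulDiffChar {M N : Type} [AddCommGroup M] [Module k M] [AddCommGroup N] [Module k N]
    (𝒜 : ℤ → Submodule k M) (dM : M →ₗ[k] M) (dN : N →ₗ[k] N)
    (D : M ⊗[k] N →ₗ[k] M ⊗[k] N) : Prop :=
  ∀ ⦃i : ℤ⦄ ⦃a : M⦄ (b : N), a ∈ 𝒜 i →
    D (a ⊗ₜ[k] b) = (dM a) ⊗ₜ[k] b + ((-1 : k) ^ i) • (a ⊗ₜ[k] (dN b))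

/-- Characterization of the Koszul twist `T(a ⊗ b) = (-1)^{|a||b|} b ⊗ a`. -/
def KoszulTwistChar {M N : Type} [AddCommGroup M] [Module k M] [AddCommGroup N] [Module k N]
    (𝒜 : ℤ → Submodule k M) (ℬ : ℤ → Submodule k N)
    (T : M ⊗[k] N →ₗ[k] N ⊗[k] M) : Prop :=
  ∀ ⦃i j : ℤ⦄ ⦃a : M⦄ ⦃b : N⦄, a ∈ 𝒜 i → b ∈ ℬ j →
    T (a ⊗ₜ[k] b) = ((-1 : k) ^ (i * j)) • (b ⊗ₜ[k] a)

section Structures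

variable (k)
variable (M : Type) [AddCommGroup M] [Module k M]

/-- A `ℤ`-graded associative unital algebra, given by unbundled data. -/
structure IsGradedAlgebra (𝒜 : ℤ → Submodule k M) (mul : M →ₗ[k] M →ₗ[k] M) (one : M) :
    Prop where
  indep : iSupIndep 𝒜
  total : (⨆ i, 𝒜 i) = ⊤
  mul_mem : ∀ ⦃i j : ℤ⦄ ⦃a b : M⦄, a ∈ 𝒜 i → b ∈ 𝒜 j → mul a b ∈ 𝒜 (i + j)
  one_mem : one ∈ 𝒜 0
  mul_assoc : ∀ a b c : M, mul (mul a b) c = mul a (mul b c)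
  one_mul : ∀ a : M, mul one a = a
  mul_one : ∀ a : M, mul a one = a

/-- A differential graded algebra. -/
structure IsDGAlgebra (𝒜 : ℤ → Submodule k M) (mul : M →ₗ[k] M →ₗ[k] M) (one : M)
    (d : M →ₗ[k] M) extends IsGradedAlgebra k M 𝒜 mul one : Prop where
  d_mem : ∀ ⦃i : ℤ⦄ ⦃a : M⦄, a ∈ 𝒜 i → d a ∈ 𝒜 (i + 1)
  d_sq : ∀ a : M, d (d a) = 0
  d_mul : ∀ ⦃i : ℤ⦄ ⦃a : M⦄ (b : M), a ∈ 𝒜 i →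
    d (mul a b) = mul (d a) b + ((-1 : k) ^ i) • mul a (d b)

/-- A differential graded Poisson algebra with Poisson bracket of degree `p`. -/
structure IsDGPoisson (𝒜 : ℤ → Submodule k M) (mul : M →ₗ[k] M →ₗ[k] M) (one : M)
    (bracket : M →ₗ[k] M →ₗ[k] M) (d : M →ₗ[k] M) (p : ℤ)
    extends IsDGAlgebra k M 𝒜 mul one d : Prop where
  gcomm : ∀ ⦃i j : ℤ⦄ ⦃a b : M⦄, a ∈ 𝒜 i → b ∈ 𝒜 j →
    mul a b = ((-1 : k) ^ (i * j)) • mul b a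
  bracket_mem : ∀ ⦃i j : ℤ⦄ ⦃a b : M⦄, a ∈ 𝒜 i → b ∈ 𝒜 j → bracket a b ∈ 𝒜 (i + j + p)
  bracket_antisymm : ∀ ⦃i j : ℤ⦄ ⦃a b : M⦄, a ∈ 𝒜 i → b ∈ 𝒜 j →
    bracket a b = -(((-1 : k) ^ ((i + p) * (j + p))) • bracket b a)
  bracket_jacobi : ∀ ⦃i j : ℤ⦄ ⦃a b : M⦄ (c : M), a ∈ 𝒜 i → b ∈ 𝒜 j →
    bracket a (bracket b c) =
      bracket (bracket a b) c + ((-1 : k) ^ ((i + p) * (j + p))) • bracket b (bracket a c)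
  bracket_leibniz : ∀ ⦃i j : ℤ⦄ ⦃a b : M⦄ (c : M), a ∈ 𝒜 i → b ∈ 𝒜 j →
    bracket a (mul b c) =
      mul (bracket a b) c + ((-1 : k) ^ ((i + p) * j)) • mul b (bracket a c)
  d_bracket : ∀ ⦃i : ℤ⦄ ⦃a : M⦄ (b : M), a ∈ 𝒜 i →
    d (bracket a b) = bracket (d a) b + ((-1 : k) ^ (i + p)) • bracket a (d b)

/-- A `ℤ`-graded coalgebra, given by unbundled data. -/
structure IsGradedCoalgebra (𝒜 : ℤ → Submodule k M) (comul : M →ₗ[k] M ⊗[k] M)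
    (counit : M →ₗ[k] k) : Prop where
  comul_mem : ∀ ⦃i : ℤ⦄ ⦃a : M⦄, a ∈ 𝒜 i → comul a ∈ tgrade 𝒜 𝒜 i
  counit_zero : ∀ ⦃i : ℤ⦄ ⦃a : M⦄, a ∈ 𝒜 i → i ≠ 0 → counit a = 0
  coassoc : ∀ a : M,
    (TensorProduct.assoc k M M M) ((TensorProduct.map comul LinearMap.id) (comul a)) =
      (TensorProduct.map LinearMap.id comul) (comul a)
  counit_comul_left : ∀ a : M,
    (TensorProduct.lid k M) ((TensorProduct.map counit LinearMap.id) (comul a)) = a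
  counit_comul_right : ∀ a : M,
    (TensorProduct.rid k M) ((TensorProduct.map LinearMap.id counit) (comul a)) = a

/-- A `ℤ`-graded bialgebra (comultiplication is an algebra map for the Koszul-signed
multiplication on the tensor square). -/
structure IsGradedBialgebra (𝒜 : ℤ → Submodule k M) (mul : M →ₗ[k] M →ₗ[k] M) (one : M)
    (comul : M →ₗ[k] M ⊗[k] M) (counit : M →ₗ[k] k) : Prop where
  alg : IsGradedAlgebra k M 𝒜 mul one
  coalg : IsGradedCoalgebra k M 𝒜 comul counit
  comul_one : comul one = one ⊗ₜ[k] one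
  counit_one : counit one = 1
  counit_mul : ∀ a b : M, counit (mul a b) = counit a * counit b
  comul_mul : ∃ mul₂ : (M ⊗[k] M) →ₗ[k] (M ⊗[k] M) →ₗ[k] (M ⊗[k] M),
    KoszulMulChar 𝒜 𝒜 mul mul mul₂ ∧
      ∀ a b : M, comul (mul a b) = mul₂ (comul a) (comul b)

/-- A `ℤ`-graded Hopf algebra. -/
structure IsGradedHopf (𝒜 : ℤ → Submodule k M) (mul : M →ₗ[k] M →ₗ[k] M) (one : M)
    (comul : M →ₗ[k] M ⊗[k] M) (counit : M →ₗ[k] k) (S : M →ₗ[k] M) : Prop where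
  bialg : IsGradedBialgebra k M 𝒜 mul one comul counit
  antipode_mem : ∀ ⦃i : ℤ⦄ ⦃a : M⦄, a ∈ 𝒜 i → S a ∈ 𝒜 i
  antipode_left : ∀ a : M,
    TensorProduct.lift mul ((TensorProduct.map S LinearMap.id) (comul a)) = counit a • one
  antipode_right : ∀ a : M,
    TensorProduct.lift mul ((TensorProduct.map LinearMap.id S) (comul a)) = counit a • one

/-- `d` is a coderivation (with Koszul signs) and `ε ∘ d = 0`. -/
def CoderivationProp (𝒜 : ℤ → Submodule k M) (comul : M →ₗ[k] M ⊗[k] M)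
    (counit : M →ₗ[k] k) (d : M →ₗ[k] M) : Prop :=
  (∀ a : M, counit (d a) = 0) ∧
  ∃ D : M ⊗[k] M →ₗ[k] M ⊗[k] M, KoszulDiffChar 𝒜 d d D ∧
    ∀ a : M, comul (d a) = D (comul a)

/-- A differential graded bialgebra. -/
structure IsDGBialgebra (𝒜 : ℤ → Submodule k M) (mul : M →ₗ[k] M →ₗ[k] M) (one : M)
    (comul : M →ₗ[k] M ⊗[k] M) (counit : M →ₗ[k] k) (d : M →ₗ[k] M) : Prop where
  bialg : IsGradedBialgebra k M 𝒜 mul one comul counit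
  dga : IsDGAlgebra k M 𝒜 mul one d
  coderiv : CoderivationProp k M 𝒜 comul counit d

/-- A differential graded Hopf algebra. -/
structure IsDGHopf (𝒜 : ℤ → Submodule k M) (mul : M →ₗ[k] M →ₗ[k] M) (one : M)
    (comul : M →ₗ[k] M ⊗[k] M) (counit : M →ₗ[k] k) (d : M →ₗ[k] M) (S : M →ₗ[k] M) :
    Prop where
  dgbialg : IsDGBialgebra k M 𝒜 mul one comul counit d
  antipode_mem : ∀ ⦃i : ℤ⦄ ⦃a : M⦄, a ∈ 𝒜 i → S a ∈ 𝒜 i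
  antipode_left : ∀ a : M,
    TensorProduct.lift mul ((TensorProduct.map S LinearMap.id) (comul a)) = counit a • one
  antipode_right : ∀ a : M,
    TensorProduct.lift mul ((TensorProduct.map LinearMap.id S) (comul a)) = counit a • one

/-- A differential graded Poisson bialgebra (bracket of degree 0). -/
structure IsDGPoissonBialgebra (𝒜 : ℤ → Submodule k M) (mul : M →ₗ[k] M →ₗ[k] M) (one : M)
    (bracket : M →ₗ[k] M →ₗ[k] M) (d : M →ₗ[k] M)
    (comul : M →ₗ[k] M ⊗[k] M) (counit : M →ₗ[k] k) : Prop where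
  poisson : IsDGPoisson k M 𝒜 mul one bracket d 0
  dgbialg : IsDGBialgebra k M 𝒜 mul one comul counit d
  comul_bracket : ∃ br₂ : (M ⊗[k] M) →ₗ[k] (M ⊗[k] M) →ₗ[k] (M ⊗[k] M),
    KoszulBracketChar 𝒜 𝒜 mul mul bracket bracket 0 br₂ ∧
      ∀ a b : M, comul (bracket a b) = br₂ (comul a) (comul b)

/-- A differential graded Poisson Hopf algebra (bracket of degree 0). -/
structure IsDGPoissonHopf (𝒜 : ℤ → Submodule k M) (mul : M →ₗ[k] M →ₗ[k] M) (one : M)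
    (bracket : M →ₗ[k] M →ₗ[k] M) (d : M →ₗ[k] M)
    (comul : M →ₗ[k] M ⊗[k] M) (counit : M →ₗ[k] k) (S : M →ₗ[k] M) : Prop where
  toPoissonBialg : IsDGPoissonBialgebra k M 𝒜 mul one bracket d comul counit
  antipode_mem : ∀ ⦃i : ℤ⦄ ⦃a : M⦄, a ∈ 𝒜 i → S a ∈ 𝒜 i
  antipode_left : ∀ a : M,
    TensorProduct.lift mul ((TensorProduct.map S LinearMap.id) (comul a)) = counit a • one
  antipode_right : ∀ a : M,
    TensorProduct.lift mul ((TensorProduct.map LinearMap.id S) (comul a)) = counit a • one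

end Structures

/-- A homomorphism of differential graded algebras (unbundled data). -/
structure IsDGAlgHom {M N : Type} [AddCommGroup M] [Module k M] [AddCommGroup N] [Module k N]
    (𝒜 : ℤ → Submodule k M) (mulM : M →ₗ[k] M →ₗ[k] M) (oneM : M) (dM : M →ₗ[k] M)
    (ℬ : ℤ → Submodule k N) (mulN : N →ₗ[k] N →ₗ[k] N) (oneN : N) (dN : N →ₗ[k] N)
    (f : M →ₗ[k] N) : Prop where
  map_mem : ∀ ⦃i : ℤ⦄ ⦃a : M⦄, a ∈ 𝒜 i → f a ∈ ℬ i
  map_one : f oneM = oneN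
  map_mul : ∀ a b : M, f (mulM a b) = mulN (f a) (f b)
  map_d : ∀ a : M, f (dM a) = dN (f a)

/-- A homomorphism of differential graded Poisson algebras. -/
structure IsDGPoissonHom {M N : Type} [AddCommGroup M] [Module k M] [AddCommGroup N] [Module k N]
    (𝒜 : ℤ → Submodule k M) (mulM : M →ₗ[k] M →ₗ[k] M) (oneM : M)
    (brM : M →ₗ[k] M →ₗ[k] M) (dM : M →ₗ[k] M)
    (ℬ : ℤ → Submodule k N) (mulN : N →ₗ[k] N →ₗ[k] N) (oneN : N)
    (brN : N →ₗ[k] N →ₗ[k] N) (dN : N →ₗ[k] N)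
    (f : M →ₗ[k] N)
    extends IsDGAlgHom 𝒜 mulM oneM dM ℬ mulN oneN dN f : Prop where
  map_bracket : ∀ a b : M, f (brM a b) = brN (f a) (f b)

/-- `(E, m, h)` is the universal enveloping algebra of the DG Poisson algebra
`(A, 𝒜, mulA, oneA, brA, dA)` with bracket of degree `p`. -/
structure IsUEA {A E : Type} [AddCommGroup A] [Module k A] [AddCommGroup E] [Module k E]
    (𝒜 : ℤ → Submodule k A) (mulA : A →ₗ[k] A →ₗ[k] A) (oneA : A)
    (brA : A →ₗ[k] A →ₗ[k] A) (dA : A →ₗ[k] A) (p : ℤ)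
    (ℰ : ℤ → Submodule k E) (mulE : E →ₗ[k] E →ₗ[k] E) (oneE : E) (dE : E →ₗ[k] E)
    (m h : A →ₗ[k] E) : Prop where
  dga : IsDGAlgebra k E ℰ mulE oneE dE
  m_hom : IsDGAlgHom 𝒜 mulA oneA dA ℰ mulE oneE dE m
  h_mem : ∀ ⦃i : ℤ⦄ ⦃a : A⦄, a ∈ 𝒜 i → h a ∈ ℰ (i + p)
  h_d : ∀ a : A, h (dA a) = dE (h a)
  h_lie : ∀ ⦃i j : ℤ⦄ ⦃a b : A⦄, a ∈ 𝒜 i → b ∈ 𝒜 j →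
    h (brA a b) = mulE (h a) (h b) - ((-1 : k) ^ ((i + p) * (j + p))) • mulE (h b) (h a)
  m_bracket : ∀ ⦃i j : ℤ⦄ ⦃a b : A⦄, a ∈ 𝒜 i → b ∈ 𝒜 j →
    m (brA a b) = mulE (h a) (m b) - ((-1 : k) ^ ((i + p) * j)) • mulE (m b) (h a)
  h_mul : ∀ ⦃i j : ℤ⦄ ⦃a b : A⦄, a ∈ 𝒜 i → b ∈ 𝒜 j →
    h (mulA a b) = mulE (m a) (h b) + ((-1 : k) ^ (i * j)) • mulE (m b) (h a)
  universal : ∀ (D : Type) [AddCommGroup D] [Module k D]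
    (𝒟 : ℤ → Submodule k D) (mulD : D →ₗ[k] D →ₗ[k] D) (oneD : D) (dD : D →ₗ[k] D)
    (f g : A →ₗ[k] D),
    IsDGAlgebra k D 𝒟 mulD oneD dD →
    IsDGAlgHom 𝒜 mulA oneA dA 𝒟 mulD oneD dD f →
    (∀ ⦃i : ℤ⦄ ⦃a : A⦄, a ∈ 𝒜 i → g a ∈ 𝒟 (i + p)) →
    (∀ a : A, g (dA a) = dD (g a)) →
    (∀ ⦃i j : ℤ⦄ ⦃a b : A⦄, a ∈ 𝒜 i → b ∈ 𝒜 j →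
      g (brA a b) = mulD (g a) (g b) - ((-1 : k) ^ ((i + p) * (j + p))) • mulD (g b) (g a)) →
    (∀ ⦃i j : ℤ⦄ ⦃a b : A⦄, a ∈ 𝒜 i → b ∈ 𝒜 j →
      f (brA a b) = mulD (g a) (f b) - ((-1 : k) ^ ((i + p) * j)) • mulD (f b) (g a)) →
    (∀ ⦃i j : ℤ⦄ ⦃a b : A⦄, a ∈ 𝒜 i → b ∈ 𝒜 j →
      g (mulA a b) = mulD (f a) (g b) + ((-1 : k) ^ (i * j)) • mulD (f b) (g a)) →
    ∃! φ : E →ₗ[k] D, IsDGAlgHom ℰ mulE oneE dE 𝒟 mulD oneD dD φ ∧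
      φ ∘ₗ m = f ∧ φ ∘ₗ h = g

end DGPH

namespace DGPH

open TensorProduct

/-- Functoriality of the universal enveloping algebra: a DG Poisson algebra
homomorphism `φ : A → B` lifts uniquely to a DG algebra homomorphism `φᵉ : Aᵉ → Bᵉ` with
`φᵉ ∘ m_A = m_B ∘ φ` and `φᵉ ∘ h_A = h_B ∘ φ`. -/
theorem uea_functorial {k : Type} [Field k] (p : ℤ)
    (A B EA EB : Type) [AddCommGroup A] [Module k A] [AddCommGroup B] [Module k B]
    [AddCommGroup EA] [Module k EA] [AddCommGroup EB] [Module k EB]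
    (𝒜 : ℤ → Submodule k A) (mulA : A →ₗ[k] A →ₗ[k] A) (oneA : A)
    (brA : A →ₗ[k] A →ₗ[k] A) (dA : A →ₗ[k] A)
    (ℬ : ℤ → Submodule k B) (mulB : B →ₗ[k] B →ₗ[k] B) (oneB : B)
    (brB : B →ₗ[k] B →ₗ[k] B) (dB : B →ₗ[k] B)
    (ℰA : ℤ → Submodule k EA) (mulEA : EA →ₗ[k] EA →ₗ[k] EA) (oneEA : EA) (dEA : EA →ₗ[k] EA)
    (mA hA : A →ₗ[k] EA)
    (ℰB : ℤ → Submodule k EB) (mulEB : EB →ₗ[k] EB →ₗ[k] EB) (oneEB : EB) (dEB : EB →ₗ[k] EB)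
    (mB hB : B →ₗ[k] EB)
    (hPA : IsDGPoisson k A 𝒜 mulA oneA brA dA p)
    (hPB : IsDGPoisson k B ℬ mulB oneB brB dB p)
    (hUA : IsUEA 𝒜 mulA oneA brA dA p ℰA mulEA oneEA dEA mA hA)
    (hUB : IsUEA ℬ mulB oneB brB dB p ℰB mulEB oneEB dEB mB hB)
    (φ : A →ₗ[k] B)
    (hφ : IsDGPoissonHom 𝒜 mulA oneA brA dA ℬ mulB oneB brB dB φ) :
    ∃! φe : EA →ₗ[k] EB,
      IsDGAlgHom ℰA mulEA oneEA dEA ℰB mulEB oneEB dEB φe ∧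
      φe ∘ₗ mA = mB ∘ₗ φ ∧ φe ∘ₗ hA = hB ∘ₗ φ := by
  refine hUA.universal EB ℰB mulEB oneEB dEB (mB ∘ₗ φ) (hB ∘ₗ φ) hUB.dga
    ?_ ?_ ?_ ?_ ?_ ?_
  · exact { map_mem := fun i a ha => hUB.m_hom.map_mem (hφ.map_mem ha)
            map_one := by simp [hφ.map_one, hUB.m_hom.map_one]
            map_mul := fun a b => by simp [hφ.map_mul, hUB.m_hom.map_mul]
            map_d := fun a => by simp [hφ.map_d, hUB.m_hom.map_d] }
  · exact fun i a ha => hUB.h_mem (hφ.map_mem ha)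
  · intro a; simp [hφ.map_d, hUB.h_d]
  · intro i j a b ha hb
    simp only [LinearMap.comp_apply, hφ.map_bracket]
    exact hUB.h_lie (hφ.map_mem ha) (hφ.map_mem hb)
  · intro i j a b ha hb
    simp only [LinearMap.comp_apply, hφ.map_bracket]
    exact hUB.m_bracket (hφ.map_mem ha) (hφ.map_mem hb)
  · intro i j a b ha hb
    simp only [LinearMap.comp_apply, hφ.map_mul]
    exact hUB.h_mul (hφ.map_mem ha) (hφ.map_mem hb)

end DGPH
end

section
/- Let L be a finite-dimensional DG Lie algebra over a field k of characteristic 0 and S(L) its graded symmetric algebra with the DG Poisson Hopf structure (bracket extending the Lie bracket, Δ(a) = a⊗1+1⊗a and S(a) = -a for a ∈ L). Then for every a ∈ S(L), {S(a_{(1)}), a_{(2)}} = 0, where Δ(a) = a_{(1)} ⊗ a_{(2)} in Sweedler notation. -/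
open TensorProduct

namespace DGPH

open TensorProduct

variable (k : Type) [Field k]

/-- A differential graded Lie algebra (bracket of degree 0). -/
structure IsDGLie (L : Type) [AddCommGroup L] [Module k L]
    (ℒ : ℤ → Submodule k L) (lie : L →ₗ[k] L →ₗ[k] L) (dL : L →ₗ[k] L) : Prop where
  indep : iSupIndep ℒ
  total : (⨆ i, ℒ i) = ⊤
  lie_mem : ∀ ⦃i j : ℤ⦄ ⦃a b : L⦄, a ∈ ℒ i → b ∈ ℒ j → lie a b ∈ ℒ (i + j)
  lie_antisymm : ∀ ⦃i j : ℤ⦄ ⦃a b : L⦄, a ∈ ℒ i → b ∈ ℒ j →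
    lie a b = -(((-1 : k) ^ (i * j)) • lie b a)
  lie_jacobi : ∀ ⦃i j : ℤ⦄ ⦃a b : L⦄ (c : L), a ∈ ℒ i → b ∈ ℒ j →
    lie a (lie b c) = lie (lie a b) c + ((-1 : k) ^ (i * j)) • lie b (lie a c)
  d_mem : ∀ ⦃i : ℤ⦄ ⦃a : L⦄, a ∈ ℒ i → dL a ∈ ℒ (i + 1)
  d_sq : ∀ a : L, dL (dL a) = 0
  d_lie : ∀ ⦃i : ℤ⦄ ⦃a : L⦄ (b : L), a ∈ ℒ i →
    dL (lie a b) = lie (dL a) b + ((-1 : k) ^ i) • lie a (dL b)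

/-- `(SL, ι)` is the graded symmetric algebra of the DG Lie algebra `L`, equipped with its
induced DG Poisson structure (the bracket extends `[·,·]_L` as a graded biderivation) and
its standard graded bialgebra structure (elements of `L` are primitive). -/
structure IsSymLieBialg (L : Type) [AddCommGroup L] [Module k L]
    (ℒ : ℤ → Submodule k L) (lie : L →ₗ[k] L →ₗ[k] L) (dL : L →ₗ[k] L)
    (SL : Type) [AddCommGroup SL] [Module k SL]
    (𝒮 : ℤ → Submodule k SL) (mul : SL →ₗ[k] SL →ₗ[k] SL) (one : SL)
    (bracket : SL →ₗ[k] SL →ₗ[k] SL) (d : SL →ₗ[k] SL)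
    (comul : SL →ₗ[k] SL ⊗[k] SL) (counit : SL →ₗ[k] k)
    (ι : L →ₗ[k] SL) : Prop where
  lieAlg : IsDGLie k L ℒ lie dL
  poisson : IsDGPoisson k SL 𝒮 mul one bracket d 0
  ι_mem : ∀ ⦃i : ℤ⦄ ⦃a : L⦄, a ∈ ℒ i → ι a ∈ 𝒮 i
  ι_bracket : ∀ a b : L, bracket (ι a) (ι b) = ι (lie a b)
  ι_d : ∀ a : L, d (ι a) = ι (dL a)
  generates : ∀ P : Submodule k SL, one ∈ P → (∀ a : L, ι a ∈ P) →
    (∀ u v : SL, u ∈ P → v ∈ P → mul u v ∈ P) → P = ⊤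
  bialg : IsGradedBialgebra k SL 𝒮 mul one comul counit
  dgbialg_d : CoderivationProp k SL 𝒮 comul counit d
  comul_ι : ∀ a : L, comul (ι a) = (ι a) ⊗ₜ[k] one + one ⊗ₜ[k] (ι a)
  counit_ι : ∀ a : L, counit (ι a) = 0

/-- The graded symmetric algebra of a DG Lie algebra together with its antipode
(`S(a) = -a` on `L`, extended as a graded algebra anti-homomorphism). -/
structure IsSymLieHopf (L : Type) [AddCommGroup L] [Module k L]
    (ℒ : ℤ → Submodule k L) (lie : L →ₗ[k] L →ₗ[k] L) (dL : L →ₗ[k] L)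
    (SL : Type) [AddCommGroup SL] [Module k SL]
    (𝒮 : ℤ → Submodule k SL) (mul : SL →ₗ[k] SL →ₗ[k] SL) (one : SL)
    (bracket : SL →ₗ[k] SL →ₗ[k] SL) (d : SL →ₗ[k] SL)
    (comul : SL →ₗ[k] SL ⊗[k] SL) (counit : SL →ₗ[k] k)
    (ι : L →ₗ[k] SL) (S : SL →ₗ[k] SL)
    extends IsSymLieBialg k L ℒ lie dL SL 𝒮 mul one bracket d comul counit ι : Prop where
  S_one : S one = one
  S_ι : ∀ a : L, S (ι a) = -(ι a)
  S_mem : ∀ ⦃i : ℤ⦄ ⦃a : SL⦄, a ∈ 𝒮 i → S a ∈ 𝒮 i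
  S_anti : ∀ ⦃i j : ℤ⦄ ⦃u v : SL⦄, u ∈ 𝒮 i → v ∈ 𝒮 j →
    S (mul u v) = ((-1 : k) ^ (i * j)) • mul (S v) (S u)

end DGPH

/-!
Write `F(a) = {S a₍₁₎, a₍₂₎}`. Since `S(L)` is generated by `1` and `L`, on which `F` vanishes
(brackets with `1` are zero and elements of `L` are primitive), it suffices that
`F(u) = F(v) = 0` implies `F(uv) = 0`. Expanding `F(uv) = ±{S v₍₁₎ S u₍₁₎, u₍₂₎ v₍₂₎}` by the
biderivation rule, every term contains `F(u)`, `F(v)`, or one of the sums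
`S u₍₁₎ u₍₂₎ = ε(u) 1`, `S v₍₁₎ v₍₂₎ = ε(v) 1` inside a bracket, and `{1, -} = 0`.
The antipode identity `S a₍₁₎ a₍₂₎ = ε(a) 1` is itself obtained by the same generation
argument, from the multiplicativity of `Δ` and the anti-multiplicativity of `S`.
-/

namespace DGPH

open TensorProduct

variable {k : Type} [Field k]

theorem neg_one_zpow_eq_of_even_sub {m n : ℤ} (h : Even (m - n)) :
    (-1 : k) ^ m = (-1 : k) ^ n := by
  rw [← sub_add_cancel m n, zpow_add₀ (by norm_num), h.neg_one_zpow, one_mul]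

section Graded

variable {M N : Type} [AddCommGroup M] [Module k M] [AddCommGroup N] [Module k N]
  {𝒜 : ℤ → Submodule k M} {ℬ : ℤ → Submodule k N}

theorem linearMap_ext_of_homogeneous {P : Type} [AddCommGroup P] [Module k P]
    (htot : (⨆ i, 𝒜 i) = ⊤) {f g : M →ₗ[k] P}
    (h : ∀ ⦃i : ℤ⦄ ⦃x : M⦄, x ∈ 𝒜 i → f x = g x) : f = g :=
  LinearMap.ext_on (s := ⋃ i, (𝒜 i : Set M)) (by rw [← Submodule.iSup_eq_span, htot])
    fun _ hx => (Set.mem_iUnion.1 hx).elim fun _ hi => h hi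

theorem induction_on_homogeneous_tmul (h𝒜 : (⨆ i, 𝒜 i) = ⊤) (hℬ : (⨆ i, ℬ i) = ⊤)
    {C : M ⊗[k] N → Prop} (z : M ⊗[k] N) (zero : C 0)
    (tmul : ∀ ⦃i j : ℤ⦄ ⦃x : M⦄ ⦃y : N⦄, x ∈ 𝒜 i → y ∈ ℬ j → C (x ⊗ₜ y))
    (add : ∀ z w, C z → C w → C (z + w)) : C z := by
  refine z.induction_on zero (fun x y => ?_) add
  refine Submodule.iSup_induction 𝒜 (motive := fun x => ∀ y, C (x ⊗ₜ y))
    (h𝒜 ▸ Submodule.mem_top) (fun i x hx y => ?_) (fun y => by simpa using zero)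
    (fun x x' hx hx' y => by simpa [add_tmul] using add _ _ (hx y) (hx' y)) y
  exact Submodule.iSup_induction ℬ (motive := fun y => C (x ⊗ₜ y)) (hℬ ▸ Submodule.mem_top)
    (fun j y hy => tmul hx hy) (by simpa using zero)
    (fun y y' hy hy' => by simpa [tmul_add] using add _ _ hy hy')

def IsGradedComm (𝒜 : ℤ → Submodule k M) (mul : M →ₗ[k] M →ₗ[k] M) : Prop :=
  ∀ ⦃i j : ℤ⦄ ⦃a b : M⦄, a ∈ 𝒜 i → b ∈ 𝒜 j → mul a b = ((-1 : k) ^ (i * j)) • mul b a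

end Graded

namespace IsGradedAlgebra

variable {M : Type} [AddCommGroup M] [Module k M] {𝒜 : ℤ → Submodule k M}
  {mul : M →ₗ[k] M →ₗ[k] M} {one : M}

theorem mul_left_comm (hA : IsGradedAlgebra k M 𝒜 mul one) (hcomm : IsGradedComm 𝒜 mul)
    {i j : ℤ} {a b : M} (c : M) (ha : a ∈ 𝒜 i) (hb : b ∈ 𝒜 j) :
    mul a (mul b c) = ((-1 : k) ^ (i * j)) • mul b (mul a c) := by
  rw [← hA.mul_assoc, hcomm ha hb, map_smul, LinearMap.smul_apply, hA.mul_assoc]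

theorem mul_right_comm (hA : IsGradedAlgebra k M 𝒜 mul one) (hcomm : IsGradedComm 𝒜 mul)
    {i j : ℤ} (a : M) {b c : M} (hb : b ∈ 𝒜 i) (hc : c ∈ 𝒜 j) :
    mul (mul a b) c = ((-1 : k) ^ (i * j)) • mul (mul a c) b := by
  rw [hA.mul_assoc, hcomm hb hc, map_smul, hA.mul_assoc]

theorem mul_mul_mul_comm (hA : IsGradedAlgebra k M 𝒜 mul one) (hcomm : IsGradedComm 𝒜 mul)
    {i j : ℤ} (a : M) {b c : M} (d : M) (hb : b ∈ 𝒜 i) (hc : c ∈ 𝒜 j) :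
    mul (mul a b) (mul c d) = ((-1 : k) ^ (i * j)) • mul (mul a c) (mul b d) := by
  rw [hA.mul_assoc, hA.mul_left_comm hcomm d hb hc, map_smul, ← hA.mul_assoc]

end IsGradedAlgebra

namespace IsDGPoisson

variable {M : Type} [AddCommGroup M] [Module k M] {𝒜 : ℤ → Submodule k M}
  {mul bracket : M →ₗ[k] M →ₗ[k] M} {one : M} {d : M →ₗ[k] M}

theorem bracket_mem₀ (hP : IsDGPoisson k M 𝒜 mul one bracket d 0) {i j : ℤ} {a b : M}
    (ha : a ∈ 𝒜 i) (hb : b ∈ 𝒜 j) : bracket a b ∈ 𝒜 (i + j) := by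
  simpa using hP.bracket_mem ha hb

theorem bracket_antisymm₀ (hP : IsDGPoisson k M 𝒜 mul one bracket d 0) {i j : ℤ} {a b : M}
    (ha : a ∈ 𝒜 i) (hb : b ∈ 𝒜 j) : bracket a b = -(((-1 : k) ^ (i * j)) • bracket b a) := by
  simpa using hP.bracket_antisymm ha hb

theorem bracket_mul_right (hP : IsDGPoisson k M 𝒜 mul one bracket d 0) {i j : ℤ} {a b : M}
    (c : M) (ha : a ∈ 𝒜 i) (hb : b ∈ 𝒜 j) :
    bracket a (mul b c) = mul (bracket a b) c + ((-1 : k) ^ (i * j)) • mul b (bracket a c) := by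
  simpa using hP.bracket_leibniz c ha hb

theorem bracket_mul_left (hP : IsDGPoisson k M 𝒜 mul one bracket d 0) {i j l : ℤ}
    {a b c : M} (ha : a ∈ 𝒜 i) (hb : b ∈ 𝒜 j) (hc : c ∈ 𝒜 l) :
    bracket (mul a b) c = mul a (bracket b c) + ((-1 : k) ^ (j * l)) • mul (bracket a c) b := by
  rw [hP.bracket_antisymm₀ (hP.mul_mem ha hb) hc, hP.bracket_mul_right b hc ha,
    hP.bracket_antisymm₀ hc ha, hP.bracket_antisymm₀ hc hb]
  simp only [map_neg, map_smul, LinearMap.neg_apply, LinearMap.smul_apply, smul_neg, neg_neg,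
    smul_add, smul_smul, neg_add_rev]
  match_scalars <;> simp only [mul_one, ← zpow_add₀ (by norm_num : (-1 : k) ≠ 0)]
  · exact Even.neg_one_zpow ⟨(i + j) * l, by ring⟩
  · exact neg_one_zpow_eq_of_even_sub ⟨i * l, by ring⟩

theorem bracket_one_right (hP : IsDGPoisson k M 𝒜 mul one bracket d 0) (a : M) :
    bracket a one = 0 := by
  have h : bracket.flip one = 0 := linearMap_ext_of_homogeneous hP.total fun i a ha => by
    have hleib := hP.bracket_mul_right one ha hP.one_mem
    rwa [hP.one_mul, hP.mul_one, hP.one_mul, mul_zero, zpow_zero, one_smul,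
      left_eq_add] at hleib
  exact LinearMap.congr_fun h a

theorem bracket_one_left (hP : IsDGPoisson k M 𝒜 mul one bracket d 0) (a : M) :
    bracket one a = 0 := by
  have h : bracket one = 0 := linearMap_ext_of_homogeneous hP.total fun i a ha => by
    rw [hP.bracket_antisymm₀ hP.one_mem ha, hP.bracket_one_right, smul_zero, neg_zero,
      LinearMap.zero_apply]
  exact LinearMap.congr_fun h a

/-- The pure-tensor case of `antipodeConv_bracket_mul₂_tmul`, with `s = S u₁`, `x = u₂`,
`t = S v₁`, `y = v₂`. -/
theorem bracket_mul_mul_expand (hP : IsDGPoisson k M 𝒜 mul one bracket d 0) {a b c e : ℤ}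
    {s x t y : M} (hs : s ∈ 𝒜 a) (hx : x ∈ 𝒜 b) (ht : t ∈ 𝒜 c) (hy : y ∈ 𝒜 e) :
    ((-1 : k) ^ (c * b) * (-1 : k) ^ (a * c)) • bracket (mul t s) (mul x y) =
      mul (bracket s x) (mul t y) - mul (bracket (mul s x) t) y
      + ((-1 : k) ^ (a * b)) • mul x (bracket s (mul t y))
      + ((-1 : k) ^ (a * b)) • mul (mul x s) (bracket t y) := by
  have hA := hP.toIsGradedAlgebra
  rw [hP.bracket_mul_left ht hs (hP.mul_mem hx hy), hP.bracket_mul_right y hs hx,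
    hP.bracket_mul_right y ht hx, hP.bracket_mul_left hs hx ht, hP.bracket_mul_right y hs ht,
    hP.bracket_antisymm₀ hx ht]
  simp only [map_add, map_smul, map_neg, LinearMap.add_apply, LinearMap.smul_apply,
    LinearMap.neg_apply, smul_add, smul_smul]
  rw [hA.mul_left_comm hP.gcomm _ (hP.bracket_mem₀ hs hx) ht, hA.mul_left_comm hP.gcomm _ ht hx,
    hA.mul_assoc s (bracket t x) y, hP.gcomm hs (hP.mul_mem (hP.bracket_mem₀ ht hx) hy),
    ← hA.mul_assoc x (bracket s t) y, hP.gcomm hx (hP.bracket_mem₀ hs ht),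
    hA.mul_right_comm hP.gcomm x hs (hP.bracket_mem₀ ht hy)]
  simp only [map_smul, LinearMap.smul_apply, smul_smul]
  match_scalars <;> simp only [mul_one, ← zpow_add₀ (by norm_num : (-1 : k) ≠ 0)]
  · exact neg_one_zpow_eq_of_even_sub ⟨0, by ring⟩
  · exact neg_one_zpow_eq_of_even_sub ⟨c * b, by ring⟩
  · rw [neg_neg]
    exact neg_one_zpow_eq_of_even_sub ⟨0, by ring⟩
  · exact neg_one_zpow_eq_of_even_sub ⟨c * b, by ring⟩
  · rw [neg_one_zpow_eq_of_even_sub (m := a * b + b * (a + c)) (n := b * c) ⟨a * b, by ring⟩,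
      neg_add_cancel]

end IsDGPoisson

section Convolution

variable {M : Type} [AddCommGroup M] [Module k M] {𝒜 : ℤ → Submodule k M}
  {mul bracket : M →ₗ[k] M →ₗ[k] M} {one : M} {d S : M →ₗ[k] M}
  {mul₂ : (M ⊗[k] M) →ₗ[k] (M ⊗[k] M) →ₗ[k] (M ⊗[k] M)}

/-- On `Δ a` this is `f (S a₍₁₎) a₍₂₎`. -/
def antipodeConv (f : M →ₗ[k] M →ₗ[k] M) (S : M →ₗ[k] M) : M ⊗[k] M →ₗ[k] M :=
  lift f ∘ₗ map S LinearMap.id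

@[simp]
theorem antipodeConv_tmul (f : M →ₗ[k] M →ₗ[k] M) (S : M →ₗ[k] M) (x y : M) :
    antipodeConv f S (x ⊗ₜ y) = f (S x) y :=
  rfl

/-- On `w` and `Δ a` this is `{w, S a₍₁₎} a₍₂₎`. -/
def bracketConv (mul bracket : M →ₗ[k] M →ₗ[k] M) (S : M →ₗ[k] M) :
    M →ₗ[k] M ⊗[k] M →ₗ[k] M :=
  LinearMap.lcomp k M (map S LinearMap.id) ∘ₗ TensorProduct.uncurry (RingHom.id k) M M M ∘ₗ
    LinearMap.llcomp k M M (M →ₗ[k] M) mul ∘ₗ bracket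

@[simp]
theorem bracketConv_tmul (mul bracket : M →ₗ[k] M →ₗ[k] M) (S : M →ₗ[k] M) (w x y : M) :
    bracketConv mul bracket S w (x ⊗ₜ y) = mul (bracket w (S x)) y :=
  rfl

theorem IsDGPoisson.bracketConv_one (hP : IsDGPoisson k M 𝒜 mul one bracket d 0)
    (S : M →ₗ[k] M) : bracketConv mul bracket S one = 0 :=
  TensorProduct.ext' fun x y => by simp [hP.bracket_one_left]

structure IsGradedAntiHom (𝒜 : ℤ → Submodule k M) (mul : M →ₗ[k] M →ₗ[k] M)
    (S : M →ₗ[k] M) : Prop where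
  mem : ∀ ⦃i : ℤ⦄ ⦃a : M⦄, a ∈ 𝒜 i → S a ∈ 𝒜 i
  map_mul : ∀ ⦃i j : ℤ⦄ ⦃u v : M⦄, u ∈ 𝒜 i → v ∈ 𝒜 j →
    S (mul u v) = ((-1 : k) ^ (i * j)) • mul (S v) (S u)

theorem antipodeConv_mul_mul₂ (hA : IsGradedAlgebra k M 𝒜 mul one)
    (hcomm : IsGradedComm 𝒜 mul) (hchar : KoszulMulChar 𝒜 𝒜 mul mul mul₂)
    (hS : IsGradedAntiHom 𝒜 mul S) (z z' : M ⊗[k] M) :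
    antipodeConv mul S (mul₂ z z') = mul (antipodeConv mul S z) (antipodeConv mul S z') := by
  induction z using induction_on_homogeneous_tmul hA.total hA.total with
  | zero => simp
  | add z w hz hw => simp only [map_add, LinearMap.add_apply, hz, hw]
  | @tmul i j x y hx hy =>
    induction z' using induction_on_homogeneous_tmul hA.total hA.total with
    | zero => simp
    | add z w hz hw => simp only [map_add, hz, hw]
    | @tmul i' j' x' y' hx' hy' =>
      rw [hchar x y' hx' hy, map_smul, antipodeConv_tmul, antipodeConv_tmul, antipodeConv_tmul,
        hS.map_mul hx hx', hA.mul_mul_mul_comm hcomm _ _ hy (hS.mem hx'),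
        hcomm (hS.mem hx) (hS.mem hx')]
      simp only [map_smul, LinearMap.smul_apply, smul_smul, mul_comm]

theorem antipodeConv_bracket_mul₂_tmul (hP : IsDGPoisson k M 𝒜 mul one bracket d 0)
    (hchar : KoszulMulChar 𝒜 𝒜 mul mul mul₂) (hS : IsGradedAntiHom 𝒜 mul S) {a b : ℤ}
    {u₁ u₂ : M} (hu₁ : u₁ ∈ 𝒜 a) (hu₂ : u₂ ∈ 𝒜 b) (z : M ⊗[k] M) :
    antipodeConv bracket S (mul₂ (u₁ ⊗ₜ u₂) z) =
      mul (bracket (S u₁) u₂) (antipodeConv mul S z)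
      - bracketConv mul bracket S (mul (S u₁) u₂) z
      + ((-1 : k) ^ (a * b)) • mul u₂ (bracket (S u₁) (antipodeConv mul S z))
      + ((-1 : k) ^ (a * b)) • mul (mul u₂ (S u₁)) (antipodeConv bracket S z) := by
  induction z using induction_on_homogeneous_tmul hP.total hP.total with
  | zero => simp
  | add z w hz hw =>
    simp only [map_add, hz, hw, smul_add]
    abel
  | @tmul c e v₁ v₂ hv₁ hv₂ =>
    rw [hchar u₁ v₂ hv₁ hu₂, map_smul, antipodeConv_tmul, hS.map_mul hu₁ hv₁, map_smul,
      LinearMap.smul_apply, smul_smul]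
    simp only [antipodeConv_tmul, bracketConv_tmul]
    exact hP.bracket_mul_mul_expand (hS.mem hu₁) hu₂ (hS.mem hv₁) hv₂

theorem antipodeConv_bracket_mul₂ (hP : IsDGPoisson k M 𝒜 mul one bracket d 0)
    (hchar : KoszulMulChar 𝒜 𝒜 mul mul mul₂) (hS : IsGradedAntiHom 𝒜 mul S)
    {z' : M ⊗[k] M} {c : k} (hmul : antipodeConv mul S z' = c • one)
    (hbracket : antipodeConv bracket S z' = 0) (z : M ⊗[k] M) :
    antipodeConv bracket S (mul₂ z z') =
      c • antipodeConv bracket S z - bracketConv mul bracket S (antipodeConv mul S z) z' := by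
  induction z using induction_on_homogeneous_tmul hP.total hP.total with
  | zero => simp
  | add z w hz hw =>
    simp only [map_add, LinearMap.add_apply, hz, hw, smul_add]
    abel
  | @tmul a b u₁ u₂ hu₁ hu₂ =>
    rw [antipodeConv_bracket_mul₂_tmul hP hchar hS hu₁ hu₂, hmul, hbracket]
    simp [hP.bracket_one_right, hP.mul_one]

end Convolution

section SymLie

variable {L : Type} [AddCommGroup L] [Module k L] {ℒ : ℤ → Submodule k L}
  {lie : L →ₗ[k] L →ₗ[k] L} {dL : L →ₗ[k] L} {SL : Type} [AddCommGroup SL] [Module k SL]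
  {𝒮 : ℤ → Submodule k SL} {mul : SL →ₗ[k] SL →ₗ[k] SL} {one : SL}
  {bracket : SL →ₗ[k] SL →ₗ[k] SL} {d : SL →ₗ[k] SL} {comul : SL →ₗ[k] SL ⊗[k] SL}
  {counit : SL →ₗ[k] k} {ι : L →ₗ[k] SL} {S : SL →ₗ[k] SL}

theorem IsSymLieBialg.linearMap_ext
    (hS : IsSymLieBialg k L ℒ lie dL SL 𝒮 mul one bracket d comul counit ι)
    {N : Type} [AddCommGroup N] [Module k N] {f g : SL →ₗ[k] N} (hone : f one = g one)
    (hι : ∀ a, f (ι a) = g (ι a))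
    (hmul : ∀ u v, f u = g u → f v = g v → f (mul u v) = g (mul u v)) : f = g :=
  LinearMap.eqLocus_eq_top.1 (hS.generates _ hone hι hmul)

theorem IsSymLieHopf.isGradedAntiHom
    (hS : IsSymLieHopf k L ℒ lie dL SL 𝒮 mul one bracket d comul counit ι S) :
    IsGradedAntiHom 𝒮 mul S :=
  ⟨hS.S_mem, hS.S_anti⟩

theorem IsSymLieHopf.antipodeConv_mul_comul
    (hS : IsSymLieHopf k L ℒ lie dL SL 𝒮 mul one bracket d comul counit ι S) (u : SL) :
    antipodeConv mul S (comul u) = counit u • one := by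
  obtain ⟨mul₂, hchar, hcomul⟩ := hS.bialg.comul_mul
  have hP := hS.poisson
  refine LinearMap.congr_fun (hS.linearMap_ext (f := antipodeConv mul S ∘ₗ comul)
    (g := LinearMap.toSpanSingleton k SL one ∘ₗ counit) ?_ (fun a => ?_) fun u v hu hv => ?_) u
  · simp [hS.bialg.comul_one, hS.S_one, hP.one_mul, hS.bialg.counit_one]
  · simp [hS.comul_ι, hS.S_ι, hS.S_one, hS.counit_ι, hP.one_mul, hP.mul_one]
  · simp only [LinearMap.comp_apply, LinearMap.toSpanSingleton_apply] at hu hv ⊢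
    rw [hcomul, antipodeConv_mul_mul₂ hP.toIsGradedAlgebra hP.gcomm hchar hS.isGradedAntiHom,
      hu, hv, hS.bialg.counit_mul]
    simp only [map_smul, LinearMap.smul_apply, hP.one_mul, smul_smul, mul_comm]

end SymLie

theorem symLie_antipode_bracket_general {k : Type} [Field k]
    (L : Type) [AddCommGroup L] [Module k L]
    (ℒ : ℤ → Submodule k L) (lie : L →ₗ[k] L →ₗ[k] L) (dL : L →ₗ[k] L)
    (SL : Type) [AddCommGroup SL] [Module k SL]
    (𝒮 : ℤ → Submodule k SL) (mul : SL →ₗ[k] SL →ₗ[k] SL) (one : SL)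
    (bracket : SL →ₗ[k] SL →ₗ[k] SL) (d : SL →ₗ[k] SL)
    (comul : SL →ₗ[k] SL ⊗[k] SL) (counit : SL →ₗ[k] k)
    (ι : L →ₗ[k] SL) (S : SL →ₗ[k] SL)
    (hS : IsSymLieHopf k L ℒ lie dL SL 𝒮 mul one bracket d comul counit ι S) :
    ∀ a : SL,
      TensorProduct.lift bracket ((TensorProduct.map S LinearMap.id) (comul a)) = 0 := by
  obtain ⟨mul₂, hchar, hcomul⟩ := hS.bialg.comul_mul
  have hP := hS.poisson
  intro a
  refine LinearMap.congr_fun (hS.linearMap_ext (f := antipodeConv bracket S ∘ₗ comul) (g := 0)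
    ?_ (fun a => ?_) fun u v hu hv => ?_) a
  · simp [hS.bialg.comul_one, hS.S_one, hP.bracket_one_right]
  · simp [hS.comul_ι, hS.S_ι, hS.S_one, hP.bracket_one_left, hP.bracket_one_right]
  · simp only [LinearMap.comp_apply, LinearMap.zero_apply] at hu hv ⊢
    rw [hcomul, antipodeConv_bracket_mul₂ hP hchar hS.isGradedAntiHom
      (hS.antipodeConv_mul_comul v) hv, hu, hS.antipodeConv_mul_comul u, map_smul,
      hP.bracketConv_one]
    simp

/-- For a finite-dimensional DG Lie algebra `L` over a field of
characteristic zero, the graded symmetric algebra `S(L)` with its DG Poisson Hopf structure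
satisfies `{S(a₍₁₎), a₍₂₎} = 0` for all `a ∈ S(L)`. -/
theorem symLie_antipode_bracket {k : Type} [Field k] [CharZero k]
    (L : Type) [AddCommGroup L] [Module k L] [FiniteDimensional k L]
    (ℒ : ℤ → Submodule k L) (lie : L →ₗ[k] L →ₗ[k] L) (dL : L →ₗ[k] L)
    (SL : Type) [AddCommGroup SL] [Module k SL]
    (𝒮 : ℤ → Submodule k SL) (mul : SL →ₗ[k] SL →ₗ[k] SL) (one : SL)
    (bracket : SL →ₗ[k] SL →ₗ[k] SL) (d : SL →ₗ[k] SL)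
    (comul : SL →ₗ[k] SL ⊗[k] SL) (counit : SL →ₗ[k] k)
    (ι : L →ₗ[k] SL) (S : SL →ₗ[k] SL)
    (hS : IsSymLieHopf k L ℒ lie dL SL 𝒮 mul one bracket d comul counit ι S) :
    ∀ a : SL,
      TensorProduct.lift bracket ((TensorProduct.map S LinearMap.id) (comul a)) = 0 :=
  symLie_antipode_bracket_general L ℒ lie dL SL 𝒮 mul one bracket d comul counit ι S hS

end DGPH
end
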